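/- arXiv:0902.1826 — 7 statements merged into one kernel-verified Lean document; each statement's English description precedes it below -/
import Mathlib

section
/- Let d1, d2 be positive real numbers and t a real number, and let c be a real number. Suppose x1, x2 are positive real numbers satisfying the two Lagrange equations (the Einstein equations for the scalar curvature under the volume constraint): -d1/(2*x1^2) + t*x2/(2*x1^3) - c*d1*x1^(d1-1)*x2^d2 = 0 and (t - d2)/(2*x2^2) - t/(4*x1^2) - c*d2*x1^d1*x2^(d2-1) = 0, where powers with real exponents are real powers (rpow) of the positive bases. Then 2*t*d1*x1^2 - 2*d1*d2*x1^2 - t*d1*x2^2 + 2*d1*d2*x1*x2 - 2*t*d2*x2^2 = 0. -/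
/-!
Each Lagrange equation expresses the multiplier term `c * d1 * d2 * x1 ^ d1 * x2 ^ d2`
up to a factor: multiplying the first by `d2 * x1` and the second by `d1 * x2` makes the
multiplier terms equal, so subtracting them eliminates `c` and the real powers. Clearing the
denominator `4 * x1 ^ 2 * x2` of what remains gives the polynomial equation.
-/

open Real

theorem mul_mul_rpow_sub_one_eq_mul_mul_rpow_sub_one {x1 x2 : ℝ} (hx1 : x1 ≠ 0) (hx2 : x2 ≠ 0)
    (d1 d2 c : ℝ) :
    d2 * x1 * (c * d1 * x1 ^ (d1 - 1) * x2 ^ d2)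
      = d1 * x2 * (c * d2 * x1 ^ d1 * x2 ^ (d2 - 1)) := by
  rw [rpow_sub_one hx1, rpow_sub_one hx2]
  field_simp

theorem lagrange_polynomial_eq_mul_sub {x1 x2 : ℝ} (hx1 : x1 ≠ 0) (hx2 : x2 ≠ 0)
    (d1 d2 t : ℝ) :
    2 * t * d1 * x1 ^ 2 - 2 * d1 * d2 * x1 ^ 2 - t * d1 * x2 ^ 2
        + 2 * d1 * d2 * x1 * x2 - 2 * t * d2 * x2 ^ 2
      = 4 * x1 ^ 2 * x2 * (d1 * x2 * ((t - d2) / (2 * x2 ^ 2) - t / (4 * x1 ^ 2))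
          - d2 * x1 * (-d1 / (2 * x1 ^ 2) + t * x2 / (2 * x1 ^ 3))) := by
  field_simp
  ring

theorem lagrange_system_reduces_to_polynomial_general
    (d1 d2 t c : ℝ)
    (x1 x2 : ℝ) (hx1 : 0 < x1) (hx2 : 0 < x2)
    (h1 : -d1 / (2 * x1 ^ 2) + t * x2 / (2 * x1 ^ 3)
        - c * d1 * x1 ^ (d1 - 1) * x2 ^ d2 = 0)
    (h2 : (t - d2) / (2 * x2 ^ 2) - t / (4 * x1 ^ 2)
        - c * d2 * x1 ^ d1 * x2 ^ (d2 - 1) = 0) :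
    2 * t * d1 * x1 ^ 2 - 2 * d1 * d2 * x1 ^ 2 - t * d1 * x2 ^ 2
      + 2 * d1 * d2 * x1 * x2 - 2 * t * d2 * x2 ^ 2 = 0 := by
  rw [sub_eq_zero] at h1 h2
  have multiplier_eliminated := mul_mul_rpow_sub_one_eq_mul_mul_rpow_sub_one hx1.ne' hx2.ne' d1 d2 c
  rw [← h1, ← h2] at multiplier_eliminated
  rw [lagrange_polynomial_eq_mul_sub hx1.ne' hx2.ne', multiplier_eliminated, sub_self, mul_zero]

/-- Reduction of the Lagrange system (9) to the polynomial equation (10). -/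
theorem lagrange_system_reduces_to_polynomial
    (d1 d2 t c : ℝ) (hd1 : 0 < d1) (hd2 : 0 < d2)
    (x1 x2 : ℝ) (hx1 : 0 < x1) (hx2 : 0 < x2)
    (h1 : -d1 / (2 * x1 ^ 2) + t * x2 / (2 * x1 ^ 3)
        - c * d1 * x1 ^ (d1 - 1) * x2 ^ d2 = 0)
    (h2 : (t - d2) / (2 * x2 ^ 2) - t / (4 * x1 ^ 2)
        - c * d2 * x1 ^ d1 * x2 ^ (d2 - 1) = 0) :
    2 * t * d1 * x1 ^ 2 - 2 * d1 * d2 * x1 ^ 2 - t * d1 * x2 ^ 2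
      + 2 * d1 * d2 * x1 * x2 - 2 * t * d2 * x2 ^ 2 = 0 :=
  lagrange_system_reduces_to_polynomial_general d1 d2 t c x1 x2 hx1 hx2 h1 h2
end

section
/- Let d1, d2 be positive real numbers and set t = d1*d2/(d1 + 4*d2). Then for every positive real number x2, the equation 2*t*d1 - 2*d1*d2 - t*d1*x2^2 + 2*d1*d2*x2 - 2*t*d2*x2^2 = 0 holds if and only if x2 = 2 or x2 = 4*d2/(d1 + 2*d2). Moreover these two values are distinct, i.e. 4*d2/(d1 + 2*d2) ≠ 2. -/
/-- The normalized polynomial equation (10) with x1 = 1 and t = d1*d2/(d1+4*d2)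
has exactly two positive solutions, x2 = 2 and x2 = 4*d2/(d1+2*d2), and they
are distinct. -/
theorem einstein_solutions
    (d1 d2 : ℝ) (hd1 : 0 < d1) (hd2 : 0 < d2)
    (t : ℝ) (ht : t = d1 * d2 / (d1 + 4 * d2)) :
    (∀ x2 : ℝ, 0 < x2 →
      (2 * t * d1 - 2 * d1 * d2 - t * d1 * x2 ^ 2 + 2 * d1 * d2 * x2
          - 2 * t * d2 * x2 ^ 2 = 0
        ↔ x2 = 2 ∨ x2 = 4 * d2 / (d1 + 2 * d2)))
    ∧ 4 * d2 / (d1 + 2 * d2) ≠ 2 := by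
  have h4 : (0:ℝ) < d1 + 4 * d2 := by linarith
  have h2 : (0:ℝ) < d1 + 2 * d2 := by linarith
  subst ht
  constructor
  · intro x hx
    constructor
    · intro h
      have h' : d1 * d2 * ((x - 2) * ((d1 + 2 * d2) * x - 4 * d2)) = 0 := by
        field_simp at h
        nlinarith [h]
      have hne : d1 * d2 ≠ 0 := by positivity
      have := (mul_eq_zero.mp h').resolve_left hne
      rcases mul_eq_zero.mp this with h1 | h1
      · left; linarith
      · right; rw [eq_div_iff h2.ne']; linarith
    · rintro (rfl | h)
      · field_simp; ring
      · subst h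
        field_simp
        ring
  · intro h
    rw [div_eq_iff h2.ne'] at h
    linarith
end

section
/- Let d1, d2 be positive real numbers and set t = d1*d2/(d1 + 4*d2). For a positive real number x2, the following are equivalent: (i) there exists a real number c such that -d1/2 + t*x2/2 - c*d1*x2^d2 = 0 and (t - d2)/(2*x2^2) - t/4 - c*d2*x2^(d2-1) = 0 (the Lagrange system (9) at x1 = 1, with real powers of the positive base x2); (ii) x2 = 2 or x2 = 4*d2/(d1 + 2*d2). -/
/-! Since `x₂ ^ (d₂ - 1) = x₂ ^ d₂ / x₂`, both Lagrange equations are linear in the multiplier `c`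
with non-vanishing coefficients, so a multiplier exists iff the two equations are proportional.
After clearing denominators and using `t (d₁ + 4 d₂) = d₁ d₂`, this compatibility condition is the
quadratic `(x₂ - 2) ((d₁ + 2 d₂) x₂ - 4 d₂) = 0`. -/

theorem exists_sub_mul_eq_zero_and_iff {K : Type*} [Field K] {p q a b : K} (ha : a ≠ 0) :
    (∃ c : K, p - c * a = 0 ∧ q - c * b = 0) ↔ p * b = q * a := by
  constructor
  · rintro ⟨c, hp, hq⟩
    linear_combination b * hp - a * hq
  · intro h
    refine ⟨p / a, by field_simp; ring, ?_⟩
    field_simp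
    linear_combination -h

theorem lagrange_compatibility_eq_factor {K : Type*} [Field K] [CharZero K] {d1 d2 t x A : K}
    (ht : t * (d1 + 4 * d2) = d1 * d2) (hx : x ≠ 0) :
    4 * x ^ 2 * (d1 + 4 * d2) *
        ((-d1 / 2 + t * x / 2) * (d2 * (A / x)) - ((t - d2) / (2 * x ^ 2) - t / 4) * (d1 * A)) =
      d1 * d2 * A * ((x - 2) * ((d1 + 2 * d2) * x - 4 * d2)) := by
  field_simp
  linear_combination 2 * A * ((d1 + 2 * d2) * x ^ 2 - 2 * d1) * ht

/-- Theorem 2 at the level of the variational equations: the normalized (x1 = 1)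
Lagrange system (9) has a solution for some multiplier c iff x2 = 2 or
x2 = 4*d2/(d1+2*d2). -/
theorem lagrange_system_iff_einstein
    (d1 d2 : ℝ) (hd1 : 0 < d1) (hd2 : 0 < d2)
    (t : ℝ) (ht : t = d1 * d2 / (d1 + 4 * d2))
    (x2 : ℝ) (hx2 : 0 < x2) :
    (∃ c : ℝ, -d1 / 2 + t * x2 / 2 - c * d1 * x2 ^ d2 = 0 ∧
        (t - d2) / (2 * x2 ^ 2) - t / 4 - c * d2 * x2 ^ (d2 - 1) = 0)
      ↔ x2 = 2 ∨ x2 = 4 * d2 / (d1 + 2 * d2) := by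
  have hA : 0 < x2 ^ d2 := Real.rpow_pos_of_pos hx2 d2
  have ht' : t * (d1 + 4 * d2) = d1 * d2 := by rw [ht, div_mul_cancel₀ _ (by positivity)]
  calc _ ↔ ∃ c : ℝ, (-d1 / 2 + t * x2 / 2) - c * (d1 * x2 ^ d2) = 0 ∧
        ((t - d2) / (2 * x2 ^ 2) - t / 4) - c * (d2 * (x2 ^ d2 / x2)) = 0 := by
          simp only [Real.rpow_sub_one hx2.ne', mul_assoc]
    _ ↔ _ := exists_sub_mul_eq_zero_and_iff (by positivity)
    _ ↔ (x2 - 2) * ((d1 + 2 * d2) * x2 - 4 * d2) = 0 := by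
          rw [← sub_eq_zero, ← mul_right_inj' (by positivity : 4 * x2 ^ 2 * (d1 + 4 * d2) ≠ 0),
            mul_zero, lagrange_compatibility_eq_factor ht' hx2.ne', mul_eq_zero,
            or_iff_right (by positivity)]
    _ ↔ _ := by
          rw [mul_eq_zero, sub_eq_zero, sub_eq_zero, eq_div_iff (by positivity), mul_comm]
end

section
/- Let d1, d2 be positive real numbers and set t = d1*d2/(d1 + 4*d2). Then there exists a real number c such that -d1/2 + t*2/2 - c*d1*2^d2 = 0 and (t - d2)/(2*2^2) - t/4 - c*d2*2^(d2-1) = 0; that is, the point (x1, x2) = (1, 2) satisfies the Lagrange system (9) for some multiplier c (real powers of the positive base 2 via rpow). -/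
/-- The Kähler–Einstein point (x1, x2) = (1, 2) satisfies the Lagrange system (9)
for some multiplier c. -/
theorem kahler_einstein_is_critical
    (d1 d2 : ℝ) (hd1 : 0 < d1) (hd2 : 0 < d2)
    (t : ℝ) (ht : t = d1 * d2 / (d1 + 4 * d2)) :
    ∃ c : ℝ, -d1 / 2 + t * 2 / 2 - c * d1 * (2 : ℝ) ^ d2 = 0 ∧
      (t - d2) / (2 * 2 ^ 2) - t / 4 - c * d2 * (2 : ℝ) ^ (d2 - 1) = 0 := by
  have hp : (0 : ℝ) < (2 : ℝ) ^ d2 := Real.rpow_pos_of_pos two_pos d2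
  have hpne : ((2 : ℝ) ^ d2) ≠ 0 := ne_of_gt hp
  have hden : d1 + 4 * d2 ≠ 0 := by positivity
  have hsub : (2 : ℝ) ^ (d2 - 1) = (2 : ℝ) ^ d2 / 2 := by
    rw [Real.rpow_sub two_pos, Real.rpow_one]
  refine ⟨(t - d1 / 2) / (d1 * (2 : ℝ) ^ d2), ?_, ?_⟩
  · field_simp
    ring
  · rw [hsub]
    have ht' : t * (d1 + 4 * d2) = d1 * d2 := by
      rw [ht]; field_simp
    field_simp
    nlinarith [ht']
end

section
/- Let d1, d2 be positive real numbers, c a real number, and set t = d1*d2/(d1 + 4*d2). Consider the 3×3 real matrix H (the bordered Hessian of the scalar curvature at the Kähler–Einstein point (x1, x2) = (1, 2)) with rows: (0, -d1*2^d2, -d2*2^(d2-1)); (-d1*2^d2, d1 - 3*t - c*d1*(d1-1)*2^d2, t/2 - c*d1*d2*2^(d2-1)); (-d2*2^(d2-1), t/2 - c*d1*d2*2^(d2-1), (d2 - t)/8 - c*d2*(d2-1)*2^(d2-2)), where powers with real exponents are real powers of 2. Then det H = -(d1 + d2)*d1*d2*2^(2*d2-2)*(d2/(d1 + 4*d2)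 + c*2^d2); in particular, if c > 0 then det H < 0. -/
/-!
Expanding a determinant along its zero corner, a bordered 2 × 2 block is minus the block's
quadratic form evaluated at the border. Writing every power of two as a rational multiple of
`s = 2 ^ d2`, that quadratic form at the Kähler–Einstein point collapses, once
`t * (d1 + 4 * d2) = d1 * d2` is used, to `(d1 + d2) * d1 * d2 * s ^ 2 / 4 * (d2 / (d1 + 4 * d2) + c * s)`,
which is positive for positive `d1`, `d2`, `c`.
-/

theorem det_bordered_fin_three {R : Type*} [CommRing R] (p q a b e : R) :
    !![0, p, q; p, a, b; q, b, e].det = -(p ^ 2 * e - 2 * p * q * b + q ^ 2 * a) := by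
  rw [Matrix.det_fin_three]
  simp only [Matrix.of_apply, Matrix.cons_val', Matrix.cons_val_zero, Matrix.cons_val_one,
    Matrix.cons_val_two, Matrix.head_cons, Matrix.tail_cons, Matrix.empty_val',
    Matrix.cons_val_fin_one, Matrix.head_fin_const]
  ring

theorem Real.rpow_sub_two {x : ℝ} (hx : x ≠ 0) (y : ℝ) : x ^ (y - 2) = x ^ y / x ^ 2 := by
  exact_mod_cast Real.rpow_sub_natCast hx y 2

theorem Real.rpow_two_mul_sub_two {x : ℝ} (hx : 0 < x) (y : ℝ) :
    x ^ (2 * y - 2) = (x ^ y) ^ 2 / x ^ 2 := by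
  rw [← Real.rpow_mul_natCast hx.le, Nat.cast_ofNat, mul_comm y]
  exact Real.rpow_sub_two hx.ne' (2 * y)

theorem det_borderedHessian_eq (d1 d2 c s t : ℝ) (hden : d1 + 4 * d2 ≠ 0)
    (ht : t = d1 * d2 / (d1 + 4 * d2)) :
    !![0, -d1 * s, -d2 * (s / 2);
      -d1 * s, d1 - 3 * t - c * d1 * (d1 - 1) * s, t / 2 - c * d1 * d2 * (s / 2);
      -d2 * (s / 2), t / 2 - c * d1 * d2 * (s / 2),
        (d2 - t) / 8 - c * d2 * (d2 - 1) * (s / 2 ^ 2)].det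
      = -(d1 + d2) * d1 * d2 * (s ^ 2 / 2 ^ 2) * (d2 / (d1 + 4 * d2) + c * s) := by
  have hw : d2 / (d1 + 4 * d2) * (d1 + 4 * d2) = d2 := div_mul_cancel₀ d2 hden
  rw [det_bordered_fin_three, ht, mul_div_assoc]
  linear_combination (s ^ 2 * d1 * (d1 + 2 * d2) / 8) * hw

/-- Computation (11): the determinant of the bordered Hessian at the
Kähler–Einstein point (x1, x2) = (1, 2), and its negativity for c > 0. -/
theorem bordered_hessian_kahler_einstein
    (d1 d2 c : ℝ) (hd1 : 0 < d1) (hd2 : 0 < d2)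
    (t : ℝ) (ht : t = d1 * d2 / (d1 + 4 * d2))
    (H : Matrix (Fin 3) (Fin 3) ℝ)
    (hH : H = !![0, -d1 * (2 : ℝ) ^ d2, -d2 * (2 : ℝ) ^ (d2 - 1);
      -d1 * (2 : ℝ) ^ d2, d1 - 3 * t - c * d1 * (d1 - 1) * (2 : ℝ) ^ d2,
        t / 2 - c * d1 * d2 * (2 : ℝ) ^ (d2 - 1);
      -d2 * (2 : ℝ) ^ (d2 - 1), t / 2 - c * d1 * d2 * (2 : ℝ) ^ (d2 - 1),
        (d2 - t) / 8 - c * d2 * (d2 - 1) * (2 : ℝ) ^ (d2 - 2)]) :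
    H.det = -(d1 + d2) * d1 * d2 * (2 : ℝ) ^ (2 * d2 - 2)
        * (d2 / (d1 + 4 * d2) + c * (2 : ℝ) ^ d2)
      ∧ (0 < c → H.det < 0) := by
  have hdet : H.det = -(d1 + d2) * d1 * d2 * ((2 : ℝ) ^ (2 * d2 - 2))
      * (d2 / (d1 + 4 * d2) + c * (2 : ℝ) ^ d2) := by
    rw [hH, Real.rpow_sub_one two_ne_zero, Real.rpow_sub_two two_ne_zero,
      Real.rpow_two_mul_sub_two two_pos]
    exact det_borderedHessian_eq d1 d2 c _ t (by positivity) ht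
  refine ⟨hdet, fun hc => ?_⟩
  have hpos : 0 < (d1 + d2) * d1 * d2 * ((2 : ℝ) ^ (2 * d2 - 2))
      * (d2 / (d1 + 4 * d2) + c * (2 : ℝ) ^ d2) := by positivity
  rw [hdet]
  linarith
end

section
/- Let d1, d2 be positive real numbers, c a real number, set t = d1*d2/(d1 + 4*d2) and y = 4*d2/(d1 + 2*d2). Consider the 3×3 real matrix H (the bordered Hessian of the scalar curvature at the non-Kähler Einstein point (x1, x2) = (1, y)) with rows: (0, -d1*y^d2, -d2*y^(d2-1)); (-d1*y^d2, d1 - 3*t*y/2 - c*d1*(d1-1)*y^d2, t/2 - c*d1*d2*y^(d2-1)); (-d2*y^(d2-1), t/2 - c*d1*d2*y^(d2-1), (d2 - t)/y^3 - c*d2*(d2-1)*y^(d2-2)), where powers with real exponents are real powers of the positive base y. Then det H = -d1*y^(2*d2-2)*((d1^3*d2 + 5*d1^2*d2^2 + 6*d1*d2^3 + 2*d2^4)/((d1 + 2*d2)*(d1 + 4*d2)) + c*d2*y^d2*(d1 + d2)); in particular, if c > 0 then det H < 0. -/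
/-- Computation (12): the determinant of the bordered Hessian at the non-Kähler
Einstein point (x1, x2) = (1, y) with y = 4*d2/(d1+2*d2), and its negativity
for c > 0. -/
theorem bordered_hessian_non_kahler_einstein
    (d1 d2 c : ℝ) (hd1 : 0 < d1) (hd2 : 0 < d2)
    (t : ℝ) (ht : t = d1 * d2 / (d1 + 4 * d2))
    (y : ℝ) (hy : y = 4 * d2 / (d1 + 2 * d2))
    (H : Matrix (Fin 3) (Fin 3) ℝ)
    (hH : H = !![0, -d1 * y ^ d2, -d2 * y ^ (d2 - 1);
      -d1 * y ^ d2, d1 - 3 * t * y / 2 - c * d1 * (d1 - 1) * y ^ d2,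
        t / 2 - c * d1 * d2 * y ^ (d2 - 1);
      -d2 * y ^ (d2 - 1), t / 2 - c * d1 * d2 * y ^ (d2 - 1),
        (d2 - t) / y ^ 3 - c * d2 * (d2 - 1) * y ^ (d2 - 2)]) :
    H.det = -d1 * y ^ (2 * d2 - 2)
        * ((d1 ^ 3 * d2 + 5 * d1 ^ 2 * d2 ^ 2 + 6 * d1 * d2 ^ 3 + 2 * d2 ^ 4)
              / ((d1 + 2 * d2) * (d1 + 4 * d2))
            + c * d2 * y ^ d2 * (d1 + d2))
      ∧ (0 < c → H.det < 0) := by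
  have hden1 : 0 < d1 + 2 * d2 := by linarith
  have hden2 : 0 < d1 + 4 * d2 := by linarith
  have hy0 : 0 < y := by rw [hy]; positivity
  have hA : 0 < y ^ d2 := Real.rpow_pos_of_pos hy0 _
  have h1 : y ^ (d2 - 1) = y ^ d2 / y := by
    rw [Real.rpow_sub hy0, Real.rpow_one]
  have h2 : y ^ (d2 - 2) = y ^ d2 / y ^ 2 := by
    rw [Real.rpow_sub hy0, show (2:ℝ) = ((2:ℕ):ℝ) by norm_num, Real.rpow_natCast]
  have h3 : y ^ (2 * d2 - 2) = y ^ d2 * y ^ d2 / y ^ 2 := by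
    rw [two_mul, Real.rpow_sub hy0, Real.rpow_add hy0,
      show (2:ℝ) = ((2:ℕ):ℝ) by norm_num, Real.rpow_natCast]
  set A := y ^ d2 with hAdef
  have hdet : H.det = -d1 * (A * A / y ^ 2)
        * ((d1 ^ 3 * d2 + 5 * d1 ^ 2 * d2 ^ 2 + 6 * d1 * d2 ^ 3 + 2 * d2 ^ 4)
              / ((d1 + 2 * d2) * (d1 + 4 * d2))
            + c * d2 * A * (d1 + d2)) := by
    subst hH ht
    rw [Matrix.det_fin_three]
    simp only [Matrix.cons_val', Matrix.cons_val_zero, Matrix.cons_val_one,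
      Matrix.head_cons, Matrix.empty_val', Matrix.cons_val_fin_one,
      Matrix.head_fin_const, Matrix.cons_val_two, Matrix.tail_cons, Matrix.of_apply]
    rw [h1, h2]
    have hy' : y = 4 * d2 / (d1 + 2 * d2) := hy
    field_simp
    rw [hy']
    field_simp
    ring
  have hdet' : H.det = -d1 * y ^ (2 * d2 - 2)
        * ((d1 ^ 3 * d2 + 5 * d1 ^ 2 * d2 ^ 2 + 6 * d1 * d2 ^ 3 + 2 * d2 ^ 4)
              / ((d1 + 2 * d2) * (d1 + 4 * d2))
            + c * d2 * A * (d1 + d2)) := by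
    rw [hdet, h3]
  refine ⟨hdet', fun hc => ?_⟩
  rw [hdet']
  have hP : 0 < y ^ (2 * d2 - 2) := Real.rpow_pos_of_pos hy0 _
  have hQ : 0 < (d1 ^ 3 * d2 + 5 * d1 ^ 2 * d2 ^ 2 + 6 * d1 * d2 ^ 3 + 2 * d2 ^ 4)
              / ((d1 + 2 * d2) * (d1 + 4 * d2))
            + c * d2 * A * (d1 + d2) := by positivity
  nlinarith [mul_pos (mul_pos hd1 hP) hQ]
end

section
/- Let d1, d2 be positive real numbers, set t = d1*d2/(d1 + 4*d2) and y = 4*d2/(d1 + 2*d2). Define S : ℝ × ℝ → ℝ by S(x1, x2) = (1/2)*(d1/x1 + d2/x2) - (1/4)*(t*x2/x1^2 + 2*t/x2), and let C = {(x1, x2) : x1 > 0, x2 > 0, x1^d1 * x2^d2 = y^d2} (real powers of positive bases). Then S restricted to C has a local minimum at the point (1, y), i.e. IsLocalMinOn S C (1, y). -/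
/-!
Writing `x₁ = eᵛ`, the volume constraint forces `x₂ = y e^{-(d₁/d₂) v}`, and along this curve the
scalar curvature is a sum of three exponentials in `v`. Its first derivative at `v = 0` vanishes
(this is the Einstein equation) and its second derivative there is
`d₁² (d₁ + d₂) / (2 d₂ (d₁ + 4 d₂)) > 0`, so the second derivative test gives a local minimum in `v`.
Since `v = log x₁` depends continuously on the point, it transfers to the constraint set.
-/

open Real

section ExpSum

variable {ι : Type*} (s : Finset ι) (c e : ι → ℝ)

theorem hasDerivAt_sum_mul_exp (v : ℝ) :
    HasDerivAt (fun v ↦ ∑ i ∈ s, c i * exp (e i * v)) (∑ i ∈ s, c i * e i * exp (e i * v)) v :=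
  HasDerivAt.fun_sum fun i _ ↦ by
    simpa [mul_comm, mul_left_comm, mul_assoc] using
      (((hasDerivAt_id v).const_mul (e i)).exp).const_mul (c i)

theorem deriv_sum_mul_exp :
    deriv (fun v ↦ ∑ i ∈ s, c i * exp (e i * v)) = fun v ↦ ∑ i ∈ s, c i * e i * exp (e i * v) :=
  funext fun v ↦ (hasDerivAt_sum_mul_exp s c e v).deriv

theorem isLocalMin_sum_mul_exp (h₁ : ∑ i ∈ s, c i * e i = 0) (h₂ : 0 < ∑ i ∈ s, c i * e i ^ 2) :
    IsLocalMin (fun v ↦ ∑ i ∈ s, c i * exp (e i * v)) 0 := by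
  refine isLocalMin_of_deriv_deriv_pos ?_ ?_ (hasDerivAt_sum_mul_exp s c e 0).continuousAt
  · rw [deriv_sum_mul_exp, deriv_sum_mul_exp s (fun i ↦ c i * e i)]
    simpa [mul_assoc, sq] using h₂
  · simpa [deriv_sum_mul_exp] using h₁

end ExpSum

theorem IsLocalMin.isLocalMinOn_of_leftInverse {X Y : Type*} [TopologicalSpace X]
    [TopologicalSpace Y] {f : X → ℝ} {s : Set X} {a : X} {γ : Y → X} {ψ : X → Y}
    (hmin : IsLocalMin (f ∘ γ) (ψ a)) (hψ : ContinuousAt ψ a) (hγψ : ∀ p ∈ s, γ (ψ p) = p)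
    (ha : a ∈ s) : IsLocalMinOn f s a :=
  ((hmin.comp_continuous hψ).on s).congr
    (eventually_nhdsWithin_of_forall fun p hp ↦ congrArg f (hγψ p hp)) ha

theorem eq_mul_exp_log_of_rpow_mul_rpow_eq {a b x₁ x₂ y : ℝ} (hb : b ≠ 0) (hx₁ : 0 < x₁)
    (hx₂ : 0 < x₂) (hy : 0 < y) (h : x₁ ^ a * x₂ ^ b = y ^ b) :
    x₂ = y * exp (-(a / b) * log x₁) := by
  have hlog : a * log x₁ + b * log x₂ = b * log y := by
    rw [← log_rpow hx₁, ← log_rpow hx₂, ← log_mul (by positivity) (by positivity), h, log_rpow hy]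
  have : log x₂ = log y + -(a / b) * log x₁ := by field_simp; linarith
  rw [← exp_log hx₂, this, exp_add, exp_log hy]

noncomputable def twoSummandScalarCurvature (d₁ d₂ t : ℝ) (p : ℝ × ℝ) : ℝ :=
  (1 / 2) * (d₁ / p.1 + d₂ / p.2) - (1 / 4) * (t * p.2 / p.1 ^ 2 + 2 * t / p.2)

theorem twoSummandScalarCurvature_exp_mul_exp (d₁ d₂ t y v : ℝ) (hy : y ≠ 0) :
    twoSummandScalarCurvature d₁ d₂ t (exp v, y * exp (-(d₁ / d₂) * v)) =
      ∑ i, ![d₁ / 2, (d₂ - t) / (2 * y), -(t * y / 4)] i *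
        exp (![-1, d₁ / d₂, -(d₁ / d₂ + 2)] i * v) := by
  have h₁ : exp (-1 * v) = (exp v)⁻¹ := by rw [neg_one_mul, exp_neg]
  have h₂ : exp (-(d₁ / d₂) * v) = (exp (d₁ / d₂ * v))⁻¹ := by rw [neg_mul, exp_neg]
  have h₃ : exp (-(d₁ / d₂ + 2) * v) = (exp (d₁ / d₂ * v))⁻¹ * (exp v)⁻¹ ^ 2 := by
    rw [← exp_neg, ← exp_neg, ← exp_nat_mul, ← exp_add]; ring_nf
  simp only [twoSummandScalarCurvature, Fin.sum_univ_three, Matrix.cons_val_zero,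
    Matrix.cons_val_one, Matrix.cons_val_two, Matrix.head_cons, Matrix.tail_cons, h₁, h₂, h₃]
  field_simp
  ring

theorem isLocalMin_twoSummandScalarCurvature_along_volume_curve {d₁ d₂ : ℝ} (hd₁ : 0 < d₁)
    (hd₂ : 0 < d₂) :
    let t := d₁ * d₂ / (d₁ + 4 * d₂)
    let y := 4 * d₂ / (d₁ + 2 * d₂)
    IsLocalMin (fun v ↦ twoSummandScalarCurvature d₁ d₂ t (exp v, y * exp (-(d₁ / d₂) * v))) 0 := by
  intro t y
  simp only [twoSummandScalarCurvature_exp_mul_exp d₁ d₂ t y _ (by positivity)]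
  apply isLocalMin_sum_mul_exp <;>
    simp only [Fin.sum_univ_three, Matrix.cons_val_zero, Matrix.cons_val_one,
      Matrix.cons_val_two, Matrix.head_cons, Matrix.tail_cons, t, y]
  · field_simp
    ring
  · have second_deriv : d₁ / 2 * (-1) ^ 2
          + (d₂ - d₁ * d₂ / (d₁ + 4 * d₂)) / (2 * (4 * d₂ / (d₁ + 2 * d₂))) * (d₁ / d₂) ^ 2
          + -(d₁ * d₂ / (d₁ + 4 * d₂) * (4 * d₂ / (d₁ + 2 * d₂)) / 4) * (-(d₁ / d₂ + 2)) ^ 2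
        = d₁ ^ 2 * (d₁ + d₂) / (2 * d₂ * (d₁ + 4 * d₂)) := by
      field_simp
      ring
    rw [second_deriv]
    positivity

/-- Theorem 3 (Theorem B), non-Kähler case: the scalar curvature restricted to
the metrics of fixed volume has a local minimum at (1, y) with
y = 4*d2/(d1+2*d2). -/
theorem non_kahler_einstein_local_min
    (d1 d2 : ℝ) (hd1 : 0 < d1) (hd2 : 0 < d2)
    (t : ℝ) (ht : t = d1 * d2 / (d1 + 4 * d2))
    (y : ℝ) (hy : y = 4 * d2 / (d1 + 2 * d2))
    (S : ℝ × ℝ → ℝ)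
    (hS : S = fun p => (1 / 2) * (d1 / p.1 + d2 / p.2)
      - (1 / 4) * (t * p.2 / p.1 ^ 2 + 2 * t / p.2))
    (C : Set (ℝ × ℝ))
    (hC : C = {p : ℝ × ℝ | 0 < p.1 ∧ 0 < p.2 ∧ p.1 ^ d1 * p.2 ^ d2 = y ^ d2}) :
    IsLocalMinOn S C (1, y) := by
  subst ht hy hS hC
  have hy₀ : 0 < 4 * d2 / (d1 + 2 * d2) := by positivity
  refine IsLocalMin.isLocalMinOn_of_leftInverse (ψ := fun p ↦ log p.1)
    (γ := fun v ↦ (exp v, 4 * d2 / (d1 + 2 * d2) * exp (-(d1 / d2) * v))) ?_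
    (continuousAt_fst.log one_ne_zero) ?_ ⟨one_pos, hy₀, by simp⟩
  · rw [log_one]
    exact isLocalMin_twoSummandScalarCurvature_along_volume_curve hd1 hd2
  · rintro ⟨x₁, x₂⟩ ⟨hx₁, hx₂, hvol⟩
    simp only [exp_log hx₁, ← eq_mul_exp_log_of_rpow_mul_rpow_eq hd2.ne' hx₁ hx₂ hy₀ hvol]
end
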